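/- For all complex numbers u, v with u, −u, v, −v ∉ {z_1,…,z_L} and u ≠ v, u ≠ −v, the following hold as N²×N² matrices over End(W): (i) [S(u)_a, S(v)_b] = [S(u)_a + S(v)_b, (u − v)^{−1} P_{ab}] + [S(u)_a − S(v)_b, (u + v)^{−1} Q_{ab}], where Q_{ab} := K_a P_{ab}^{t_a} K_a^{−1}; and (ii) K_a P_{ab}^{t_a} K_a^{−1} = K_b P_{ab}^{t_b} K_b^{−1}, where t_a (resp. t_b) denotes partial transposition in the first (resp. second) auxiliary matrix factor. -/

import Mathlib

/-!
Each entry of `S(u)` is a sum over the sites `ℓ` of `X^{(ℓ)}`, where `X` is the scalar matrix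
`(u - z_ℓ)⁻¹ E_{ji} + (-u - z_ℓ)⁻¹ K E_{ij} K⁻¹` (using `Kᵀ = ηK`, `η² = 1`). Operators at distinct
sites commute and `X ↦ X^{(ℓ)}` preserves commutators, so every entry of `[S(u)_a, S(v)_b]` is the
sum over sites of a commutator of two scalar matrices, while the right-hand side is linear in `S`.
This reduces (i) to a single site, where products of the rank-one matrices involved are explicit and
the coefficients agree by the partial-fraction identities
`(u - z)⁻¹ (v - z)⁻¹ = (u - v)⁻¹ ((v - z)⁻¹ - (u - z)⁻¹)` and
`(u - z)⁻¹ (-v - z)⁻¹ = (u + v)⁻¹ ((-v - z)⁻¹ - (u - z)⁻¹)`.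
Part (ii) is the entrywise identity `K_{ji} K⁻¹_{lk} = K_{ij} K⁻¹_{kl}`, again from `Kᵀ = ηK`.
-/

open Matrix
open scoped TensorProduct

noncomputable section

variable {N L : ℕ}
variable {V : Fin L → Type} [∀ ℓ, AddCommGroup (V ℓ)] [∀ ℓ, Module ℂ (V ℓ)]
variable (ρ : ∀ ℓ, Matrix (Fin N) (Fin N) ℂ →ₗ[ℂ] Module.End ℂ (V ℓ))

/-- The operator `X^{(ℓ)}` on `W = ⨂_ℓ V ℓ`, acting as `ρ ℓ X` in the `ℓ`-th tensor
factor and as the identity elsewhere. -/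
def siteOp (ℓ : Fin L) (X : Matrix (Fin N) (Fin N) ℂ) :
    Module.End ℂ (⨂[ℂ] i, V i) :=
  PiTensorProduct.map (Function.update (fun i => (LinearMap.id : V i →ₗ[ℂ] V i)) ℓ (ρ ℓ X))

/-- The matrix `𝐏_{aℓ}` over `End W`, whose `(i,j)` entry is `(E_{ji})^{(ℓ)}`. -/
def Pm (ℓ : Fin L) : Matrix (Fin N) (Fin N) (Module.End ℂ (⨂[ℂ] i, V i)) :=
  Matrix.of fun i j => siteOp ρ ℓ (Matrix.single j i 1)

/-- `T_a(u) = Σ_ℓ (u − z_ℓ)⁻¹ 𝐏_{aℓ}`. -/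
def Tm (z : Fin L → ℂ) (u : ℂ) : Matrix (Fin N) (Fin N) (Module.End ℂ (⨂[ℂ] i, V i)) :=
  ∑ ℓ : Fin L, (u - z ℓ)⁻¹ • Pm ρ ℓ

/-- A scalar `N×N` matrix viewed as a matrix over `End W`. -/
def emb (V : Fin L → Type) [∀ ℓ, AddCommGroup (V ℓ)] [∀ ℓ, Module ℂ (V ℓ)]
    (M : Matrix (Fin N) (Fin N) ℂ) :
    Matrix (Fin N) (Fin N) (Module.End ℂ (⨂[ℂ] i, V i)) :=
  M.map (algebraMap ℂ (Module.End ℂ (⨂[ℂ] i, V i)))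

/-- `S_a(u) = T_a(u) + K T_a(−u)^{t_a} K⁻¹`. -/
def Sm (z : Fin L → ℂ) (K : Matrix (Fin N) (Fin N) ℂ) (u : ℂ) :
    Matrix (Fin N) (Fin N) (Module.End ℂ (⨂[ℂ] i, V i)) :=
  Tm ρ z u + emb V K * (Tm ρ z (-u))ᵀ * emb V K⁻¹

/-- `M_a = M ⊗ 1` as an `N²×N²` matrix. -/
def aM {A : Type} [Zero A] (M : Matrix (Fin N) (Fin N) A) :
    Matrix (Fin N × Fin N) (Fin N × Fin N) A :=
  Matrix.of fun p q => if p.2 = q.2 then M p.1 q.1 else 0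

/-- `M_b = 1 ⊗ M` as an `N²×N²` matrix. -/
def bM {A : Type} [Zero A] (M : Matrix (Fin N) (Fin N) A) :
    Matrix (Fin N × Fin N) (Fin N × Fin N) A :=
  Matrix.of fun p q => if p.1 = q.1 then M p.2 q.2 else 0

/-- The permutation matrix `P_{ab} = Σ_{ij} E_{ij} ⊗ E_{ji}`. -/
def PP (N : ℕ) (A : Type) [Zero A] [One A] :
    Matrix (Fin N × Fin N) (Fin N × Fin N) A :=
  Matrix.of fun p q => if p.1 = q.2 ∧ p.2 = q.1 then 1 else 0

/-- Partial transposition `t_a` in the first auxiliary factor of an `N²×N²` matrix. -/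
def ptA {A : Type} (M : Matrix (Fin N × Fin N) (Fin N × Fin N) A) :
    Matrix (Fin N × Fin N) (Fin N × Fin N) A :=
  Matrix.of fun p q => M (q.1, p.2) (p.1, q.2)

/-- Partial transposition `t_b` in the second auxiliary factor of an `N²×N²` matrix. -/
def ptB {A : Type} (M : Matrix (Fin N × Fin N) (Fin N × Fin N) A) :
    Matrix (Fin N × Fin N) (Fin N × Fin N) A :=
  Matrix.of fun p q => M (p.1, q.2) (q.1, p.2)

namespace PiTensorProduct

variable {ι R : Type*} [DecidableEq ι] [CommSemiring R] {s : ι → Type*}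
  [∀ i, AddCommMonoid (s i)] [∀ i, Module R (s i)]

def factorEmbedding (i : ι) : Module.End R (s i) →ₐ[R] Module.End R (⨂[R] j, s j) :=
  AlgHom.ofLinearMap ((mapMultilinear R s s).toLinearMap 1 i)
    (show mapMonoidHom (Pi.mulSingle i 1) = 1 by rw [Pi.mulSingle_one, map_one])
    (fun f g => show mapMonoidHom (Pi.mulSingle i (f * g)) =
        mapMonoidHom (Pi.mulSingle i f) * mapMonoidHom (Pi.mulSingle i g) by
      rw [Pi.mulSingle_mul, map_mul])

lemma factorEmbedding_apply (i : ι) (f : Module.End R (s i)) :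
    factorEmbedding i f = mapMonoidHom (Pi.mulSingle i f) := rfl

lemma factorEmbedding_commute {i j : ι} (h : i ≠ j) (f : Module.End R (s i))
    (g : Module.End R (s j)) : Commute (factorEmbedding i f) (factorEmbedding j g) := by
  rw [factorEmbedding_apply, factorEmbedding_apply]
  exact (Pi.mulSingle_commute (f := fun k => Module.End R (s k)) h f g).map _

end PiTensorProduct

theorem Finset.sum_mul_sum_sub_sum_mul_sum_of_commute {ι A : Type*} [Ring A] (s : Finset ι)
    (a b : ι → A) (h : ∀ i ∈ s, ∀ j ∈ s, i ≠ j → Commute (a i) (b j)) :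
    (∑ i ∈ s, a i) * (∑ j ∈ s, b j) - (∑ j ∈ s, b j) * (∑ i ∈ s, a i) =
      ∑ i ∈ s, (a i * b i - b i * a i) := by
  rw [Finset.sum_mul_sum, Finset.sum_mul_sum, Finset.sum_comm (s := s) (t := s),
    ← Finset.sum_sub_distrib]
  refine Finset.sum_congr rfl fun i hi => ?_
  rw [← Finset.sum_sub_distrib, Finset.sum_eq_single_of_mem i hi]
  intro j hj hji
  rw [(h j hj i hi hji).eq, sub_self]

lemma siteOp_eq_factorEmbedding (ℓ : Fin L) (X : Matrix (Fin N) (Fin N) ℂ) :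
    siteOp ρ ℓ X = PiTensorProduct.factorEmbedding ℓ (ρ ℓ X) := rfl

def sumSiteOp : (Fin L → Matrix (Fin N) (Fin N) ℂ) →ₗ[ℂ] Module.End ℂ (⨂[ℂ] i, V i) :=
  LinearMap.lsum ℂ (fun _ => Matrix (Fin N) (Fin N) ℂ) ℂ
    fun ℓ => (PiTensorProduct.factorEmbedding ℓ).toLinearMap ∘ₗ ρ ℓ

lemma sumSiteOp_apply (X : Fin L → Matrix (Fin N) (Fin N) ℂ) :
    sumSiteOp ρ X = ∑ ℓ, siteOp ρ ℓ (X ℓ) := by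
  simp [sumSiteOp, siteOp_eq_factorEmbedding]

lemma sumSiteOp_commutator
    (hρ : ∀ ℓ (X Y : Matrix (Fin N) (Fin N) ℂ),
      ρ ℓ (X * Y - Y * X) = ρ ℓ X * ρ ℓ Y - ρ ℓ Y * ρ ℓ X)
    (X Y : Fin L → Matrix (Fin N) (Fin N) ℂ) :
    sumSiteOp ρ X * sumSiteOp ρ Y - sumSiteOp ρ Y * sumSiteOp ρ X =
      sumSiteOp ρ (X * Y - Y * X) := by
  simp only [sumSiteOp_apply, siteOp_eq_factorEmbedding]
  rw [Finset.sum_mul_sum_sub_sum_mul_sum_of_commute _ _ _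
    fun ℓ _ m _ h => PiTensorProduct.factorEmbedding_commute h _ _]
  simp [hρ]

section BlockMatrices

variable {A : Type} [NonAssocSemiring A]

lemma aM_mul_apply (X : Matrix (Fin N) (Fin N) A) (Y : Matrix (Fin N × Fin N) (Fin N × Fin N) A)
    (p q : Fin N × Fin N) : (aM X * Y) p q = ∑ r, X p.1 r * Y (r, p.2) q := by
  simp [Matrix.mul_apply, Fintype.sum_prod_type, aM, ite_mul]

lemma mul_aM_apply (X : Matrix (Fin N) (Fin N) A) (Y : Matrix (Fin N × Fin N) (Fin N × Fin N) A)
    (p q : Fin N × Fin N) : (Y * aM X) p q = ∑ r, Y p (r, q.2) * X r q.1 := by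
  simp [Matrix.mul_apply, Fintype.sum_prod_type, aM, mul_ite]

lemma bM_mul_apply (X : Matrix (Fin N) (Fin N) A) (Y : Matrix (Fin N × Fin N) (Fin N × Fin N) A)
    (p q : Fin N × Fin N) : (bM X * Y) p q = ∑ r, X p.2 r * Y (p.1, r) q := by
  simp [Matrix.mul_apply, Fintype.sum_prod_type, bM, ite_mul]

lemma mul_bM_apply (X : Matrix (Fin N) (Fin N) A) (Y : Matrix (Fin N × Fin N) (Fin N × Fin N) A)
    (p q : Fin N × Fin N) : (Y * bM X) p q = ∑ r, Y p (q.1, r) * X r q.2 := by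
  simp [Matrix.mul_apply, Fintype.sum_prod_type, bM, mul_ite]

lemma aM_mul_bM_apply (X Y : Matrix (Fin N) (Fin N) A) (p q : Fin N × Fin N) :
    (aM X * bM Y) p q = X p.1 q.1 * Y p.2 q.2 := by
  simp [aM_mul_apply, bM]

lemma bM_mul_aM_apply (X Y : Matrix (Fin N) (Fin N) A) (p q : Fin N × Fin N) :
    (bM Y * aM X) p q = Y p.2 q.2 * X p.1 q.1 := by
  simp [bM_mul_apply, aM]

lemma aM_mul_PP_apply (X : Matrix (Fin N) (Fin N) A) (p q : Fin N × Fin N) :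
    (aM X * PP N A) p q = if p.2 = q.1 then X p.1 q.2 else 0 := by
  simp [aM_mul_apply, PP, ite_and, eq_comm]

lemma PP_mul_aM_apply (X : Matrix (Fin N) (Fin N) A) (p q : Fin N × Fin N) :
    (PP N A * aM X) p q = if p.1 = q.2 then X p.2 q.1 else 0 := by
  simp [mul_aM_apply, PP, ite_and, eq_comm]

lemma bM_mul_PP_apply (X : Matrix (Fin N) (Fin N) A) (p q : Fin N × Fin N) :
    (bM X * PP N A) p q = if p.1 = q.2 then X p.2 q.1 else 0 := by
  simp [bM_mul_apply, PP, ite_and, eq_comm]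

lemma PP_mul_bM_apply (X : Matrix (Fin N) (Fin N) A) (p q : Fin N × Fin N) :
    (PP N A * bM X) p q = if p.2 = q.1 then X p.1 q.2 else 0 := by
  simp [mul_bM_apply, PP, ite_and, eq_comm]

lemma aM_mul_ptA_PP_mul_aM_apply (M M' : Matrix (Fin N) (Fin N) A) (p q : Fin N × Fin N) :
    (aM M * ptA (PP N A) * aM M') p q = M p.1 p.2 * M' q.2 q.1 := by
  simp [mul_aM_apply, aM_mul_apply, ptA, PP, ite_and]

lemma bM_mul_ptB_PP_mul_bM_apply (M M' : Matrix (Fin N) (Fin N) A) (p q : Fin N × Fin N) :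
    (bM M * ptB (PP N A) * bM M') p q = M p.2 p.1 * M' q.1 q.2 := by
  simp [mul_bM_apply, bM_mul_apply, ptB, PP, ite_and]

end BlockMatrices

lemma apply_eq_mul_apply_of_transpose_eq_smul {R : Type*} [CommSemiring R] {η : R}
    {K : Matrix (Fin N) (Fin N) R} (hK : Kᵀ = η • K) (i j : Fin N) : K i j = η * K j i := by
  simpa using congrFun (congrFun hK j) i

section TwistedPerm

-- `twistedPerm` stands for `K_a P_{ab}^{t_a} K'_a` with scalar matrices `K`, `K'`.

variable {R A : Type} [CommSemiring R] [Semiring A] [Algebra R A] (K K' : Matrix (Fin N) (Fin N) R)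

lemma twistedPerm_apply (p q : Fin N × Fin N) :
    (aM (K.map (algebraMap R A)) * ptA (PP N A) * aM (K'.map (algebraMap R A))) p q =
      algebraMap R A (K p.1 p.2 * K' q.2 q.1) := by
  rw [aM_mul_ptA_PP_mul_aM_apply, map_mul]
  rfl

lemma aM_mul_twistedPerm_apply (X : Matrix (Fin N) (Fin N) A) (p q : Fin N × Fin N) :
    (aM X * (aM (K.map (algebraMap R A)) * ptA (PP N A) * aM (K'.map (algebraMap R A)))) p q =
      K' q.2 q.1 • ∑ r, K r p.2 • X p.1 r := by
  rw [aM_mul_apply]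
  simp [twistedPerm_apply, Algebra.algebraMap_eq_smul_one, Finset.smul_sum, smul_smul, mul_comm]

lemma twistedPerm_mul_aM_apply (X : Matrix (Fin N) (Fin N) A) (p q : Fin N × Fin N) :
    (aM (K.map (algebraMap R A)) * ptA (PP N A) * aM (K'.map (algebraMap R A)) * aM X) p q =
      K p.1 p.2 • ∑ r, K' q.2 r • X r q.1 := by
  rw [mul_aM_apply]
  simp [twistedPerm_apply, Algebra.algebraMap_eq_smul_one, Finset.smul_sum, smul_smul]

lemma bM_mul_twistedPerm_apply (X : Matrix (Fin N) (Fin N) A) (p q : Fin N × Fin N) :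
    (bM X * (aM (K.map (algebraMap R A)) * ptA (PP N A) * aM (K'.map (algebraMap R A)))) p q =
      K' q.2 q.1 • ∑ r, K p.1 r • X p.2 r := by
  rw [bM_mul_apply]
  simp [twistedPerm_apply, Algebra.algebraMap_eq_smul_one, Finset.smul_sum, smul_smul, mul_comm]

lemma twistedPerm_mul_bM_apply (X : Matrix (Fin N) (Fin N) A) (p q : Fin N × Fin N) :
    (aM (K.map (algebraMap R A)) * ptA (PP N A) * aM (K'.map (algebraMap R A)) * bM X) p q =
      K p.1 p.2 • ∑ r, K' r q.1 • X r q.2 := by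
  rw [mul_bM_apply]
  simp [twistedPerm_apply, Algebra.algebraMap_eq_smul_one, Finset.smul_sum, smul_smul]

lemma twistedPerm_eq_bM_ptB {η : R} (hη : η * η = 1) (hK : Kᵀ = η • K) (hK' : K'ᵀ = η • K') :
    aM (K.map (algebraMap R A)) * ptA (PP N A) * aM (K'.map (algebraMap R A)) =
      bM (K.map (algebraMap R A)) * ptB (PP N A) * bM (K'.map (algebraMap R A)) := by
  ext p q
  have hsym : K p.2 p.1 * K' q.1 q.2 = K p.1 p.2 * K' q.2 q.1 := by
    rw [apply_eq_mul_apply_of_transpose_eq_smul hK, apply_eq_mul_apply_of_transpose_eq_smul hK',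
      mul_mul_mul_comm, hη, one_mul]
  rw [twistedPerm_apply, bM_mul_ptB_PP_mul_bM_apply, Matrix.map_apply, Matrix.map_apply, ← map_mul,
    hsym]

end TwistedPerm

lemma map_mul_transpose_mul_map_apply {R A : Type*} [CommSemiring R] [Semiring A] [Algebra R A]
    (φ : Matrix (Fin N) (Fin N) R →ₗ[R] A) (M M' : Matrix (Fin N) (Fin N) R) (i j : Fin N) :
    (M.map (algebraMap R A) * (Matrix.of fun i j => φ (Matrix.single j i 1))ᵀ *
      M'.map (algebraMap R A)) i j = φ (vecMulVec (M i) (M'ᵀ j)) := by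
  have hφ : ∀ r s, φ (Matrix.single r s (M i r * M' s j)) =
      (M i r * M' s j) • φ (Matrix.single r s 1) := fun r s => by
    rw [← map_smul, Matrix.smul_single, smul_eq_mul, mul_one]
  rw [Matrix.matrix_eq_sum_single (vecMulVec (M i) (M'ᵀ j))]
  simp only [vecMulVec_apply, map_sum, Matrix.mul_apply, Matrix.map_apply, Matrix.of_apply,
    transpose_apply, Algebra.algebraMap_eq_smul_one, smul_one_mul, mul_smul_one, hφ,
    Finset.smul_sum, smul_smul]
  rw [Finset.sum_comm]
  simp only [mul_comm]

-- The `ℓ`-th summand of `S(u)_{ij}` (see `Sm_apply`), with `a = (u - z_ℓ)⁻¹` coming from `T(u)`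
-- and `b = (-u - z_ℓ)⁻¹` from `K T(-u)ᵀ K⁻¹`.
def siteEntry {R : Type*} [CommRing R] (K : Matrix (Fin N) (Fin N) R) (a b : R) (i j : Fin N) :
    Matrix (Fin N) (Fin N) R :=
  a • vecMulVec (Pi.single j 1) (Pi.single i 1) + b • vecMulVec (K i) (K⁻¹ᵀ j)

section SiteEntry

variable {R : Type*} [CommRing R] (K : Matrix (Fin N) (Fin N) R)

lemma siteEntry_mul_siteEntry (hK : IsUnit K.det) (a b c d : R) (i j k l : Fin N) :
    siteEntry K a b i j * siteEntry K c d k l =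
      (a * c * if i = l then 1 else 0) • vecMulVec (Pi.single j 1) (Pi.single k 1) +
      (a * d * K k i) • vecMulVec (Pi.single j 1) (K⁻¹ᵀ l) +
      (b * c * K⁻¹ l j) • vecMulVec (K i) (Pi.single k 1) +
      (b * d * if k = j then 1 else 0) • vecMulVec (K i) (K⁻¹ᵀ l) := by
  have hKK : K k ⬝ᵥ K⁻¹ᵀ j = if k = j then 1 else 0 := by
    rw [← Matrix.one_apply, ← Matrix.mul_nonsing_inv K hK, Matrix.mul_apply']
    rfl
  have hee : Pi.single i 1 ⬝ᵥ Pi.single l 1 = if i = l then (1 : R) else 0 := by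
    rw [single_dotProduct, one_mul, Pi.single_apply]
  simp only [siteEntry, add_mul, mul_add, smul_mul_smul, vecMulVec_mul_vecMulVec, vecMulVec_smul,
    hee, dotProduct_single, dotProduct_comm _ (K k), hKK, mul_one, smul_smul,
    transpose_apply]
  module

lemma sum_smul_siteEntry_col (hK : IsUnit K.det) (a b : R) (p i : Fin N) :
    ∑ r, K r p • siteEntry K a b i r =
      a • vecMulVec (Kᵀ p) (Pi.single i 1) + b • vecMulVec (K i) (Pi.single p 1) := by
  have hcol : K⁻¹ *ᵥ Kᵀ p = Pi.single p 1 := by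
    change K⁻¹ *ᵥ K.col p = _
    rw [← mulVec_single_one, mulVec_mulVec, nonsing_inv_mul K hK, one_mulVec]
  rw [← hcol]
  ext m n
  simp [siteEntry, vecMulVec_apply, Matrix.sum_apply, mulVec, dotProduct, Finset.mul_sum,
    Finset.sum_add_distrib, Pi.single_apply, mul_comm, mul_left_comm]

lemma sum_smul_siteEntry_invRow (hK : IsUnit K.det) (a b : R) (q j : Fin N) :
    ∑ r, K⁻¹ q r • siteEntry K a b r j =
      a • vecMulVec (Pi.single j 1) (K⁻¹ q) + b • vecMulVec (Pi.single q 1) (K⁻¹ᵀ j) := by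
  have hrow : K⁻¹ q ᵥ* K = Pi.single q 1 := by
    change K⁻¹.row q ᵥ* K = _
    rw [← single_one_vecMul, vecMul_vecMul, nonsing_inv_mul K hK, vecMul_one]
  rw [← hrow]
  ext m n
  simp [siteEntry, vecMulVec_apply, Matrix.sum_apply, vecMul, dotProduct, Finset.mul_sum,
    Finset.sum_add_distrib, Pi.single_apply, mul_comm, mul_left_comm, mul_assoc]

variable {K} {η : R}

lemma transpose_inv_of_transpose_eq_smul (hK : IsUnit K.det) (hη : η * η = 1) (hKt : Kᵀ = η • K) :
    K⁻¹ᵀ = η • K⁻¹ := by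
  rw [transpose_nonsing_inv, hKt]
  refine inv_eq_right_inv ?_
  rw [smul_mul_smul, hη, one_smul, mul_nonsing_inv K hK]

lemma siteEntry_exchange (hK : IsUnit K.det) (hη : η * η = 1) (hKt : Kᵀ = η • K)
    {a b c d s t : R} (hac : a * c = s * (c - a)) (hbd : b * d = s * (b - d))
    (had : a * d = t * (d - a)) (hbc : b * c = t * (b - c)) (p₁ q₁ p₂ q₂ : Fin N) :
    siteEntry K a b p₁ q₁ * siteEntry K c d p₂ q₂ - siteEntry K c d p₂ q₂ * siteEntry K a b p₁ q₁ =
      s • ((if p₂ = q₁ then siteEntry K a b p₁ q₂ - siteEntry K c d p₁ q₂ else 0) +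
          (if p₁ = q₂ then siteEntry K c d p₂ q₁ - siteEntry K a b p₂ q₁ else 0)) +
      t • (K⁻¹ q₂ q₁ • (∑ r, K r p₂ • siteEntry K a b p₁ r - ∑ r, K p₁ r • siteEntry K c d p₂ r) -
          K p₁ p₂ • (∑ r, K⁻¹ q₂ r • siteEntry K a b r q₁ - ∑ r, K⁻¹ r q₁ • siteEntry K c d r q₂)) := by
  have hKinvt := transpose_inv_of_transpose_eq_smul hK hη hKt
  have hsymK := apply_eq_mul_apply_of_transpose_eq_smul hKt
  have hsymKinv := apply_eq_mul_apply_of_transpose_eq_smul hKinvt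
  have hsum₁ : ∑ r, K p₁ r • siteEntry K c d p₂ r = η • ∑ r, K r p₁ • siteEntry K c d p₂ r := by
    simp_rw [Finset.smul_sum, smul_smul, hsymK p₁]
  have hsum₂ : ∑ r, K⁻¹ r q₁ • siteEntry K c d r q₂ =
      η • ∑ r, K⁻¹ q₁ r • siteEntry K c d r q₂ := by
    simp_rw [Finset.smul_sum, smul_smul, hsymKinv _ q₁]
  have hsmul_row : ∀ (M : Matrix (Fin N) (Fin N) R) i, (η • M) i = η • M i := fun _ _ => rfl
  rw [hsum₁, hsum₂]
  simp only [siteEntry_mul_siteEntry K hK, sum_smul_siteEntry_col K hK,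
    sum_smul_siteEntry_invRow K hK]
  simp only [siteEntry, hKt, hKinvt, hsmul_row, vecMulVec_smul, smul_vecMulVec, hsymK p₂ p₁,
    hsymKinv q₁ q₂]
  split_ifs <;> match_scalars <;> grind

end SiteEntry

section Rational

variable {F : Type*} [Field F]

lemma inv_mul_inv_eq_of_sub_eq {x y w : F} (hx : x ≠ 0) (hy : y ≠ 0) (hw : w ≠ 0)
    (h : x - y = w) : x⁻¹ * y⁻¹ = w⁻¹ * (y⁻¹ - x⁻¹) := by
  subst h
  field_simp

lemma siteEntry_exchange_of_inv {K : Matrix (Fin N) (Fin N) F} {η u v z : F} (hK : IsUnit K.det)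
    (hη : η * η = 1) (hKt : Kᵀ = η • K) (hu₁ : u - z ≠ 0) (hu₂ : -u - z ≠ 0) (hv₁ : v - z ≠ 0)
    (hv₂ : -v - z ≠ 0) (hs : u - v ≠ 0) (ht : u + v ≠ 0) (p₁ q₁ p₂ q₂ : Fin N) :
    let S w i j := siteEntry K (w - z)⁻¹ (-w - z)⁻¹ i j
    S u p₁ q₁ * S v p₂ q₂ - S v p₂ q₂ * S u p₁ q₁ =
      (u - v)⁻¹ • ((if p₂ = q₁ then S u p₁ q₂ - S v p₁ q₂ else 0) +
          (if p₁ = q₂ then S v p₂ q₁ - S u p₂ q₁ else 0)) +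
      (u + v)⁻¹ • (K⁻¹ q₂ q₁ • (∑ r, K r p₂ • S u p₁ r - ∑ r, K p₁ r • S v p₂ r) -
          K p₁ p₂ • (∑ r, K⁻¹ q₂ r • S u r q₁ - ∑ r, K⁻¹ r q₁ • S v r q₂)) :=
  siteEntry_exchange hK hη hKt (inv_mul_inv_eq_of_sub_eq hu₁ hv₁ hs (by ring))
    (by rw [mul_comm]; exact inv_mul_inv_eq_of_sub_eq hv₂ hu₂ hs (by ring))
    (inv_mul_inv_eq_of_sub_eq hu₁ hv₂ ht (by ring))
    (by rw [mul_comm]; exact inv_mul_inv_eq_of_sub_eq hv₁ hu₂ ht (by ring)) p₁ q₁ p₂ q₂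

end Rational

section Entries

variable (z : Fin L → ℂ) (K : Matrix (Fin N) (Fin N) ℂ)

lemma Tm_eq_of_single (w : ℂ) : Tm ρ z w = Matrix.of fun i j =>
    (∑ ℓ, (w - z ℓ)⁻¹ • (PiTensorProduct.factorEmbedding ℓ).toLinearMap ∘ₗ ρ ℓ)
      (Matrix.single j i 1) := by
  ext i j
  simp [Tm, Pm, Matrix.sum_apply, siteOp_eq_factorEmbedding]

lemma Sm_apply (u : ℂ) (i j : Fin N) :
    Sm ρ z K u i j = sumSiteOp ρ fun ℓ => siteEntry K (u - z ℓ)⁻¹ (-u - z ℓ)⁻¹ i j := by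
  rw [Sm, Matrix.add_apply, emb, emb, Tm_eq_of_single, Tm_eq_of_single, map_mul_transpose_mul_map_apply]
  simp [sumSiteOp_apply, siteEntry, siteOp_eq_factorEmbedding, Finset.sum_add_distrib,
    Matrix.single_eq_single_vecMulVec_single]

end Entries

theorem statement10
    (hρ : ∀ ℓ (X Y : Matrix (Fin N) (Fin N) ℂ),
      ρ ℓ (X * Y - Y * X) = ρ ℓ X * ρ ℓ Y - ρ ℓ Y * ρ ℓ X)
    (z : Fin L → ℂ)
    (η : ℂ) (hη : η = 1 ∨ η = -1)
    (K : Matrix (Fin N) (Fin N) ℂ)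
    (hKinv : IsUnit K.det) (hKt : Kᵀ = η • K)
    (u v : ℂ) (hu : ∀ ℓ, u ≠ z ℓ ∧ -u ≠ z ℓ) (hv : ∀ ℓ, v ≠ z ℓ ∧ -v ≠ z ℓ)
    (huv : u ≠ v) (huv' : u ≠ -v) :
    (aM (Sm ρ z K u) * bM (Sm ρ z K v) - bM (Sm ρ z K v) * aM (Sm ρ z K u) =
      ((aM (Sm ρ z K u) + bM (Sm ρ z K v)) * ((u - v)⁻¹ • PP N (Module.End ℂ (⨂[ℂ] i, V i)))
        - ((u - v)⁻¹ • PP N (Module.End ℂ (⨂[ℂ] i, V i))) * (aM (Sm ρ z K u) + bM (Sm ρ z K v)))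
      + ((aM (Sm ρ z K u) - bM (Sm ρ z K v)) *
            ((u + v)⁻¹ • (aM (emb V K) * ptA (PP N (Module.End ℂ (⨂[ℂ] i, V i))) * aM (emb V K⁻¹)))
          - ((u + v)⁻¹ • (aM (emb V K) * ptA (PP N (Module.End ℂ (⨂[ℂ] i, V i))) * aM (emb V K⁻¹))) *
            (aM (Sm ρ z K u) - bM (Sm ρ z K v))))
    ∧
    aM (emb V K) * ptA (PP N (Module.End ℂ (⨂[ℂ] i, V i))) * aM (emb V K⁻¹) =
      bM (emb V K) * ptB (PP N (Module.End ℂ (⨂[ℂ] i, V i))) * bM (emb V K⁻¹) := by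
  have hη2 : η * η = 1 := by rcases hη with rfl | rfl <;> norm_num
  refine ⟨Matrix.ext fun p q => ?_, twistedPerm_eq_bM_ptB K K⁻¹ hη2 hKt
    (transpose_inv_of_transpose_eq_smul hKinv hη2 hKt)⟩
  simp only [Matrix.mul_smul, Matrix.smul_mul, Matrix.add_mul, Matrix.mul_add,
    Matrix.sub_mul, Matrix.mul_sub, Matrix.sub_apply, Matrix.add_apply, Matrix.smul_apply,
    aM_mul_bM_apply, bM_mul_aM_apply, aM_mul_PP_apply, PP_mul_aM_apply, bM_mul_PP_apply,
    PP_mul_bM_apply, emb, aM_mul_twistedPerm_apply, twistedPerm_mul_aM_apply,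
    bM_mul_twistedPerm_apply, twistedPerm_mul_bM_apply, Sm_apply]
  rw [sumSiteOp_commutator ρ hρ]
  simp only [← map_zero (sumSiteOp ρ), ← apply_ite (sumSiteOp ρ), ← map_smul, ← map_sum,
    ← map_add, ← map_sub]
  congr 1
  funext ℓ
  simp only [Pi.sub_apply, Pi.mul_apply, Pi.add_apply, Pi.smul_apply, Finset.sum_apply,
    ite_apply, Pi.zero_apply]
  rw [siteEntry_exchange_of_inv hKinv hη2 hKt (sub_ne_zero.2 (hu ℓ).1) (sub_ne_zero.2 (hu ℓ).2)
    (sub_ne_zero.2 (hv ℓ).1) (sub_ne_zero.2 (hv ℓ).2) (sub_ne_zero.2 huv)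
    fun h => huv' (eq_neg_of_add_eq_zero_left h)]
  split_ifs <;> module
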